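/- For every real x ∈ (0,1], the relative toll satisfies 0 ≤ (ν(x) − x·log₂(1/x))/x < 2, where ν(x) = Σ_{d≥1} d·ε_d(x)·2^{-d}. -/

import Mathlib

noncomputable def epsBit (d : ℕ) (x : ℝ) : ℝ := ((⌊2 ^ d * x⌋ % 2 : ℤ) : ℝ)

noncomputable def nu (x : ℝ) : ℝ := ∑' d : ℕ, (d : ℝ) * epsBit d x / 2 ^ d

/-!
Writing `x = ∑ ε_d 2⁻ᵈ` and `ℓ = log₂ (1/x)`, the toll is `ν(x) - ℓ x = ∑ (d - ℓ) ε_d 2⁻ᵈ`.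
A digit `ε_d = 1` forces `2ᵈ x ≥ 1`, i.e. `d ≥ ℓ`, so every term is nonnegative.
The leading digit sits at `k = ⌈ℓ⌉`; as `ε_k = 1` and all digits lie in `[0, 1]`,
`∑ (d - k - 1) ε_d 2⁻ᵈ ≤ -2⁻ᵏ + ∑_{d > k} (d - k - 1) 2⁻ᵈ = 0`, so `ν(x) ≤ (k + 1) x < (ℓ + 2) x`.
-/

open Filter Finset Topology

section DyadicSeries

variable {a : ℕ → ℝ}

lemma summable_div_two_pow (ha : ∀ d, |a d| ≤ 1) : Summable fun d ↦ a d / 2 ^ d := by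
  refine summable_geometric_two.of_norm_bounded fun d ↦ ?_
  rw [Real.norm_eq_abs, abs_div, abs_of_pos (by positivity : (0 : ℝ) < 2 ^ d), div_pow, one_pow]
  exact div_le_div_of_nonneg_right (ha d) (by positivity)

lemma summable_natCast_mul_div_two_pow (ha : ∀ d, |a d| ≤ 1) :
    Summable fun d : ℕ ↦ (d : ℝ) * a d / 2 ^ d := by
  refine (summable_pow_mul_geometric_of_norm_lt_one 1
    (by norm_num : ‖(1 / 2 : ℝ)‖ < 1)).of_norm_bounded fun d ↦ ?_
  rw [Real.norm_eq_abs, abs_div, abs_mul, Nat.abs_cast,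
    abs_of_pos (by positivity : (0 : ℝ) < 2 ^ d), pow_one, div_pow, one_pow, mul_one_div]
  gcongr
  simpa using mul_le_mul_of_nonneg_left (ha d) d.cast_nonneg

lemma tsum_natCast_mul_div_sub_mul_tsum (ha : ∀ d, |a d| ≤ 1) (c : ℝ) :
    ∑' d : ℕ, d * a d / 2 ^ d - c * ∑' d : ℕ, a d / 2 ^ d =
      ∑' d : ℕ, (d - c) * a d / 2 ^ d := by
  rw [← tsum_mul_left, ← (summable_natCast_mul_div_two_pow ha).tsum_sub
    ((summable_div_two_pow ha).mul_left c)]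
  exact tsum_congr fun d ↦ by ring

lemma hasSum_sub_succ_div_two_pow (k : ℕ) :
    HasSum (fun d : ℕ ↦ if k ≤ d then ((d : ℝ) - (k + 1)) / 2 ^ d else 0) 0 := by
  -- shifted by `k`, this is `(∑ i 2⁻ⁱ - ∑ 2⁻ⁱ) / 2ᵏ = (2 - 2) / 2ᵏ`
  rw [← hasSum_nat_add_iff' k, sum_eq_zero fun i hi ↦ if_neg (by simpa using hi)]
  have h := ((hasSum_coe_mul_geometric_of_norm_lt_one (by norm_num : ‖(1 / 2 : ℝ)‖ < 1)).sub
    hasSum_geometric_two).div_const (2 ^ k)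
  rw [show (0 : ℝ) - 0 = (1 / 2 / (1 - 1 / 2) ^ 2 - 2) / 2 ^ k by norm_num]
  refine h.congr_fun fun n ↦ ?_
  simp only [le_add_iff_nonneg_left, zero_le, if_true]
  rw [pow_add, one_div_pow]
  push_cast
  field_simp
  ring

lemma tsum_natCast_mul_div_le_succ_mul_tsum (ha₀ : ∀ d, 0 ≤ a d) (ha₁ : ∀ d, a d ≤ 1) {k : ℕ}
    (hk : a k = 1) :
    ∑' d : ℕ, d * a d / 2 ^ d ≤ (k + 1) * ∑' d : ℕ, a d / 2 ^ d := by
  have ha : ∀ d, |a d| ≤ 1 := fun d ↦ abs_le.2 ⟨by linarith [ha₀ d], ha₁ d⟩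
  rw [← sub_nonpos, tsum_natCast_mul_div_sub_mul_tsum ha]
  refine (Summable.tsum_le_tsum (fun d ↦ ?_) ?_ (hasSum_sub_succ_div_two_pow k).summable).trans
    (hasSum_sub_succ_div_two_pow k).tsum_eq.le
  · rcases lt_trichotomy d k with hdk | rfl | hkd
    · rw [if_neg (by omega)]
      have : (d : ℝ) < k + 1 := by exact_mod_cast hdk.trans k.lt_succ_self
      exact div_nonpos_of_nonpos_of_nonneg
        (mul_nonpos_of_nonpos_of_nonneg (by linarith) (ha₀ d)) (by positivity)
    · rw [if_pos le_rfl, hk, mul_one]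
    · rw [if_pos hkd.le]
      have : (k : ℝ) + 1 ≤ d := by exact_mod_cast hkd
      gcongr
      exact mul_le_of_le_one_right (by linarith) (ha₁ d)
  · exact ((summable_natCast_mul_div_two_pow ha).sub
      ((summable_div_two_pow ha).mul_left ((k : ℝ) + 1))).congr fun d ↦ by ring

end DyadicSeries

lemma epsBit_eq_zero_or_one (d : ℕ) (x : ℝ) : epsBit d x = 0 ∨ epsBit d x = 1 := by
  rcases Int.emod_two_eq ⌊2 ^ d * x⌋ with h | h <;> simp [epsBit, h]

lemma epsBit_nonneg (d : ℕ) (x : ℝ) : 0 ≤ epsBit d x := by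
  rcases epsBit_eq_zero_or_one d x with h | h <;> simp [h]

lemma epsBit_le_one (d : ℕ) (x : ℝ) : epsBit d x ≤ 1 := by
  rcases epsBit_eq_zero_or_one d x with h | h <;> simp [h]

lemma abs_epsBit_le_one (d : ℕ) (x : ℝ) : |epsBit d x| ≤ 1 :=
  abs_le.2 ⟨by linarith [epsBit_nonneg d x], epsBit_le_one d x⟩

lemma floor_two_mul (y : ℝ) : ⌊2 * y⌋ = 2 * ⌊y⌋ + ⌊2 * y⌋ % 2 := by
  have h : ⌊y⌋ = ⌊2 * y⌋ / 2 := by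
    simpa using Int.floor_div_natCast (2 * y) 2
  rw [h, Int.mul_ediv_add_emod]

lemma sum_range_epsBit_div_two_pow {x : ℝ} (hx₀ : 0 ≤ x) (hx₂ : x < 2) (n : ℕ) :
    ∑ d ∈ range (n + 1), epsBit d x / 2 ^ d = ⌊2 ^ n * x⌋ / 2 ^ n := by
  induction n with
  | zero =>
    have h₀ : 0 ≤ ⌊x⌋ := Int.floor_nonneg.2 hx₀
    have h₂ : ⌊x⌋ < 2 := Int.floor_lt.2 (by exact_mod_cast hx₂)
    simp [epsBit, Int.emod_eq_of_lt h₀ h₂]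
  | succ n ih =>
    have h : (⌊2 ^ (n + 1) * x⌋ : ℝ) = 2 * ⌊2 ^ n * x⌋ + epsBit (n + 1) x := by
      rw [epsBit, pow_succ', mul_assoc]
      exact_mod_cast floor_two_mul (2 ^ n * x)
    rw [sum_range_succ, ih, h]
    field_simp
    ring

lemma tendsto_floor_two_pow_mul_div (x : ℝ) :
    Tendsto (fun n : ℕ ↦ (⌊2 ^ n * x⌋ : ℝ) / 2 ^ n) atTop (𝓝 x) := by
  have hlow : Tendsto (fun n : ℕ ↦ x - (1 / 2) ^ n) atTop (𝓝 x) := by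
    simpa using tendsto_const_nhds.sub
      (tendsto_pow_atTop_nhds_zero_of_lt_one (by norm_num : (0 : ℝ) ≤ 1 / 2) (by norm_num))
  refine tendsto_of_tendsto_of_tendsto_of_le_of_le hlow tendsto_const_nhds (fun n ↦ ?_) fun n ↦ ?_
  · have := Int.sub_one_lt_floor (2 ^ n * x)
    rw [one_div_pow, sub_le_iff_le_add, ← add_div, le_div_iff₀ (by positivity)]
    linarith
  · rw [div_le_iff₀ (by positivity), mul_comm]
    exact Int.floor_le _

lemma hasSum_epsBit_div_two_pow {x : ℝ} (hx₀ : 0 ≤ x) (hx₂ : x < 2) :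
    HasSum (fun d ↦ epsBit d x / 2 ^ d) x := by
  rw [(summable_div_two_pow (abs_epsBit_le_one · x)).hasSum_iff_tendsto_nat,
    ← tendsto_add_atTop_iff_nat 1]
  simpa only [sum_range_epsBit_div_two_pow hx₀ hx₂] using tendsto_floor_two_pow_mul_div x

lemma one_le_two_pow_mul_of_epsBit_eq_one {d : ℕ} {x : ℝ} (hx : 0 ≤ x) (h : epsBit d x = 1) :
    1 ≤ 2 ^ d * x := by
  have hodd : ⌊2 ^ d * x⌋ % 2 = 1 := Int.cast_eq_one.1 h
  have hnonneg : 0 ≤ ⌊2 ^ d * x⌋ := Int.floor_nonneg.2 (by positivity)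
  have hpos : (1 : ℤ) ≤ ⌊2 ^ d * x⌋ := by omega
  exact_mod_cast Int.le_floor.1 hpos

lemma epsBit_eq_one_of_mem_Ico {d : ℕ} {x : ℝ} (h : 2 ^ d * x ∈ Set.Ico 1 2) :
    epsBit d x = 1 := by
  have : ⌊2 ^ d * x⌋ = 1 := Int.floor_eq_iff.2 (by norm_num [h.1, h.2])
  simp [epsBit, this]

lemma logb_inv_le_of_epsBit_eq_one {d : ℕ} {x : ℝ} (hx : 0 < x) (h : epsBit d x = 1) :
    Real.logb 2 (1 / x) ≤ d := by
  rw [Real.logb_le_iff_le_rpow one_lt_two (by positivity), Real.rpow_natCast,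
    div_le_iff₀ hx]
  exact one_le_two_pow_mul_of_epsBit_eq_one hx.le h

lemma epsBit_natCeil_logb_inv {x : ℝ} (hx₀ : 0 < x) (hx₁ : x ≤ 1) :
    epsBit ⌈Real.logb 2 (1 / x)⌉₊ x = 1 := by
  set ℓ := Real.logb 2 (1 / x)
  have hℓ : 0 ≤ ℓ := Real.logb_nonneg one_lt_two (one_le_one_div hx₀ hx₁)
  have hpow : (2 : ℝ) ^ ℓ = 1 / x := Real.rpow_logb two_pos (by norm_num) (by positivity)
  refine epsBit_eq_one_of_mem_Ico ⟨?_, ?_⟩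
  · have : (2 : ℝ) ^ ℓ ≤ 2 ^ (⌈ℓ⌉₊ : ℝ) :=
      Real.rpow_le_rpow_of_exponent_le one_le_two (Nat.le_ceil ℓ)
    rwa [hpow, Real.rpow_natCast, div_le_iff₀ hx₀] at this
  · have : (2 : ℝ) ^ (⌈ℓ⌉₊ : ℝ) < 2 ^ (ℓ + 1) :=
      Real.rpow_lt_rpow_of_exponent_lt one_lt_two (Nat.ceil_lt_add_one hℓ)
    rwa [Real.rpow_add_one two_ne_zero, hpow, Real.rpow_natCast, one_div_mul_eq_div,
      lt_div_iff₀ hx₀] at this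

lemma nu_sub_mul_eq_tsum {x : ℝ} (hx₀ : 0 ≤ x) (hx₂ : x < 2) (c : ℝ) :
    nu x - c * x = ∑' d : ℕ, (d - c) * epsBit d x / 2 ^ d := by
  rw [← tsum_natCast_mul_div_sub_mul_tsum (abs_epsBit_le_one · x),
    (hasSum_epsBit_div_two_pow hx₀ hx₂).tsum_eq, nu]

lemma logb_inv_mul_le_nu {x : ℝ} (hx₀ : 0 < x) (hx₂ : x < 2) :
    Real.logb 2 (1 / x) * x ≤ nu x := by
  rw [← sub_nonneg, nu_sub_mul_eq_tsum hx₀.le hx₂]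
  refine tsum_nonneg fun d ↦ ?_
  rcases epsBit_eq_zero_or_one d x with h | h
  · simp [h]
  · have := logb_inv_le_of_epsBit_eq_one hx₀ h
    rw [h]
    exact div_nonneg (by linarith) (by positivity)

lemma nu_le_succ_mul_of_epsBit_eq_one {k : ℕ} {x : ℝ} (hx₀ : 0 ≤ x) (hx₂ : x < 2)
    (hk : epsBit k x = 1) : nu x ≤ (k + 1) * x := by
  calc nu x ≤ (k + 1) * ∑' d : ℕ, epsBit d x / 2 ^ d :=
        tsum_natCast_mul_div_le_succ_mul_tsum (epsBit_nonneg · x) (epsBit_le_one · x) hk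
    _ = (k + 1) * x := by rw [(hasSum_epsBit_div_two_pow hx₀ hx₂).tsum_eq]

theorem relative_toll_bounds :
    ∀ x ∈ Set.Ioc (0 : ℝ) 1,
      0 ≤ (nu x - x * Real.logb 2 (1 / x)) / x ∧
      (nu x - x * Real.logb 2 (1 / x)) / x < 2 := by
  rintro x ⟨hx₀, hx₁⟩
  set ℓ := Real.logb 2 (1 / x)
  have hx₂ : x < 2 := by linarith
  have hℓ : 0 ≤ ℓ := Real.logb_nonneg one_lt_two (one_le_one_div hx₀ hx₁)
  have hlow : ℓ * x ≤ nu x := logb_inv_mul_le_nu hx₀ hx₂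
  have hupp : nu x ≤ (⌈ℓ⌉₊ + 1) * x :=
    nu_le_succ_mul_of_epsBit_eq_one hx₀.le hx₂ (epsBit_natCeil_logb_inv hx₀ hx₁)
  have hceil : (⌈ℓ⌉₊ : ℝ) < ℓ + 1 := Nat.ceil_lt_add_one hℓ
  refine ⟨div_nonneg (by linarith) hx₀.le, (div_lt_iff₀ hx₀).2 ?_⟩
  linarith [mul_lt_mul_of_pos_right hceil hx₀]
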